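/- arXiv:1511.08964 — 3 statements merged into one kernel-verified Lean document; each statement's English description precedes it below -/
import Mathlib

section
/- Let B be a Hom-finite Krull-Schmidt R-category and C a full additive subcategory closed under direct summands. If f : M → N is a right almost split morphism in B and N has no nonzero direct summand in C, then the image f̃ : M → N of f in the factor category B/C is right almost split in B/C. -/
open CategoryTheory Limits ZeroObject

/-!
A retraction of a right almost split map `f : M ⟶ N` in the factor category `B/C` lifts to
`s : N ⟶ M` with `s ≫ f = 𝟙 N + u ≫ v` for some `v : Z ⟶ N` with `Z ∈ C`. If `v` were not a
split epimorphism it would factor as `t ≫ f`, and `s - u ≫ t` would split `f`. So `v` splits,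
`N` is a summand of `Z`, hence lies in `C`, and must vanish, which again splits `f`. Non-split
maps into `N` in `B/C` lift to non-split maps in `B`, and these factor through `f`.
-/

/-- The hom-relation on `B` identifying morphisms that differ by a morphism factoring
through an object of the subcategory given by the predicate `P`. The factor category
`B/C` is the category-theoretic quotient by this relation. -/
def factorRel {B : Type} [Category B] [Preadditive B] (P : B → Prop) : HomRel B :=
  fun {M N} f g => ∃ Z : B, P Z ∧ ∃ (u : M ⟶ Z) (v : Z ⟶ N), f = g + u ≫ v

def IsRightAlmostSplit {B : Type} [Category B] {M N : B} (f : M ⟶ N) : Prop :=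
  (¬ ∃ s : N ⟶ M, s ≫ f = 𝟙 N) ∧
    ∀ (L : B) (g : L ⟶ N), (¬ ∃ s : N ⟶ L, s ≫ g = 𝟙 N) → ∃ t : L ⟶ M, t ≫ f = g

section FactorRel

variable {B : Type} [Category B] [Preadditive B] (P : B → Prop)

theorem factorRel_of_compClosure {M N : B} {f g : M ⟶ N}
    (h : HomRel.CompClosure (factorRel P) f g) : factorRel P f g := by
  obtain ⟨_, _, a, _, _, b, Z, hZ, u, v, rfl⟩ := h
  exact ⟨Z, hZ, a ≫ u, v ≫ b, by simp⟩

theorem factorRel_symm {M N : B} {f g : M ⟶ N} (h : factorRel P f g) : factorRel P g f := by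
  obtain ⟨Z, hZ, u, v, rfl⟩ := h
  exact ⟨Z, hZ, -u, v, by simp⟩

theorem factorRel_trans [HasBinaryBiproducts B] (hCadd : ∀ X Y : B, P X → P Y → P (X ⊞ Y))
    {M N : B} {f g h : M ⟶ N} (hfg : factorRel P f g) (hgh : factorRel P g h) :
    factorRel P f h := by
  obtain ⟨Z₁, hZ₁, u₁, v₁, rfl⟩ := hfg
  obtain ⟨Z₂, hZ₂, u₂, v₂, rfl⟩ := hgh
  refine ⟨Z₁ ⊞ Z₂, hCadd _ _ hZ₁ hZ₂, biprod.lift u₁ u₂, biprod.desc v₁ v₂, ?_⟩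
  rw [biprod.lift_desc]
  abel

/-- `factorRel P` is not reflexive when no object satisfies `P`, hence the disjunction. -/
theorem eq_or_factorRel_of_map_eq [HasBinaryBiproducts B]
    (hCadd : ∀ X Y : B, P X → P Y → P (X ⊞ Y)) {M N : B} {f g : M ⟶ N}
    (h : (Quotient.functor (factorRel P)).map f = (Quotient.functor (factorRel P)).map g) :
    f = g ∨ factorRel P f g := by
  have hgen := Quot.eqvGen_exact h
  clear h
  induction hgen with
  | rel _ _ hxy => exact .inr (factorRel_of_compClosure P hxy)
  | refl => exact .inl rfl
  | symm _ _ _ ih => exact ih.imp Eq.symm (factorRel_symm P)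
  | trans _ _ _ _ _ ih₁ ih₂ =>
      rcases ih₁ with rfl | h₁
      · exact ih₂
      rcases ih₂ with rfl | h₂
      · exact .inr h₁
      · exact .inr (factorRel_trans P hCadd h₁ h₂)

end FactorRel

namespace IsRightAlmostSplit

variable {B : Type} [Category B] [Preadditive B] {M N : B} {f : M ⟶ N}

theorem exists_section_of_comp_eq_id_add (hf : IsRightAlmostSplit f) {Z : B} {s : N ⟶ M}
    {u : N ⟶ Z} {v : Z ⟶ N} (h : s ≫ f = 𝟙 N + u ≫ v) : ∃ w : N ⟶ Z, w ≫ v = 𝟙 N := by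
  by_contra hv
  obtain ⟨t, ht⟩ := hf.2 Z v hv
  refine hf.1 ⟨s - u ≫ t, ?_⟩
  rw [Preadditive.sub_comp, h, Category.assoc, ht, add_sub_cancel_right]

theorem not_isZero (hf : IsRightAlmostSplit f) : ¬ IsZero N :=
  fun hN => hf.1 ⟨0, hN.eq_of_src _ _⟩

theorem map_quotient [HasZeroObject B] [HasBinaryBiproducts B] (hf : IsRightAlmostSplit f)
    (P : B → Prop) (hCsum : ∀ (X Y : B) (i : X ⟶ Y) (r : Y ⟶ X), i ≫ r = 𝟙 X → P Y → P X)
    (hCadd : ∀ X Y : B, P X → P Y → P (X ⊞ Y))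
    (hN : ∀ (W N'' : B) (_ : N ≅ W ⊞ N''), P W → IsZero W) :
    IsRightAlmostSplit ((Quotient.functor (factorRel P)).map f) := by
  set Q := Quotient.functor (factorRel P)
  constructor
  · rintro ⟨s, hs⟩
    obtain ⟨s₀, rfl⟩ := Q.map_surjective s
    rw [← Q.map_comp, ← Q.map_id] at hs
    rcases eq_or_factorRel_of_map_eq P hCadd hs with h | ⟨Z, hZ, u, v, h⟩
    · exact hf.1 ⟨s₀, h⟩
    obtain ⟨w, hw⟩ := hf.exists_section_of_comp_eq_id_add h
    exact hf.not_isZero (hN N 0 (isoBiprodZero (isZero_zero B)) (hCsum N Z w v hw hZ))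
  · rintro ⟨L⟩ g hg
    obtain ⟨g₀, rfl⟩ := Q.map_surjective g
    obtain ⟨t, ht⟩ := hf.2 L g₀ fun ⟨s, hs⟩ => hg ⟨Q.map s, by rw [← Q.map_comp, hs, Q.map_id]⟩
    exact ⟨Q.map t, by rw [← Q.map_comp, ht]⟩

end IsRightAlmostSplit

theorem stmt4_general
    (B : Type) [Category B] [Preadditive B] [HasZeroObject B]
    [HasBinaryBiproducts B]
    (P : B → Prop)
    (hCsum : ∀ (X Y : B) (i : X ⟶ Y) (r : Y ⟶ X), i ≫ r = 𝟙 X → P Y → P X)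
    (hCadd : ∀ X Y : B, P X → P Y → P (X ⊞ Y))
    (M N : B) (f : M ⟶ N)
    -- `f` is right almost split in `B`
    (hnotretr : ¬ ∃ s : N ⟶ M, s ≫ f = 𝟙 N)
    (halmost : ∀ (L : B) (g : L ⟶ N), (¬ ∃ s : N ⟶ L, s ≫ g = 𝟙 N) → ∃ t : L ⟶ M, t ≫ f = g)
    -- `N` has no nonzero direct summand in `C`
    (hN : ∀ (W N'' : B) (_ : N ≅ W ⊞ N''), P W → IsZero W) :
    (¬ ∃ s : (Quotient.functor (factorRel P)).obj N ⟶ (Quotient.functor (factorRel P)).obj M,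
      s ≫ (Quotient.functor (factorRel P)).map f = 𝟙 ((Quotient.functor (factorRel P)).obj N)) ∧
    (∀ (L : B) (g : (Quotient.functor (factorRel P)).obj L ⟶
        (Quotient.functor (factorRel P)).obj N),
      (¬ ∃ s : (Quotient.functor (factorRel P)).obj N ⟶ (Quotient.functor (factorRel P)).obj L,
        s ≫ g = 𝟙 ((Quotient.functor (factorRel P)).obj N)) →
      ∃ t : (Quotient.functor (factorRel P)).obj L ⟶ (Quotient.functor (factorRel P)).obj M,
        t ≫ (Quotient.functor (factorRel P)).map f = g) :=
  let hf : IsRightAlmostSplit ((Quotient.functor (factorRel P)).map f) :=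
    IsRightAlmostSplit.map_quotient ⟨hnotretr, halmost⟩ P hCsum hCadd hN
  ⟨hf.1, fun _ => hf.2 _⟩

/-- Let `B` be a Hom-finite Krull-Schmidt `R`-category and `C` a full additive subcategory
closed under direct summands. If `f : M ⟶ N` is right almost split in `B` and `N` has no
nonzero direct summand in `C`, then the image of `f` in the factor category `B/C` is right
almost split. -/
theorem stmt4 (R : Type) [CommRing R] [IsArtinianRing R]
    (B : Type) [Category B] [Preadditive B] [Linear R B] [HasZeroObject B]
    [HasBinaryBiproducts B] [IsIdempotentComplete B]
    (hHomFinite : ∀ X Y : B, Module.Finite R (X ⟶ Y))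
    (P : B → Prop)
    (hCsum : ∀ (X Y : B) (i : X ⟶ Y) (r : Y ⟶ X), i ≫ r = 𝟙 X → P Y → P X)
    (hCadd : ∀ X Y : B, P X → P Y → P (X ⊞ Y))
    (M N : B) (f : M ⟶ N)
    -- `f` is right almost split in `B`
    (hnotretr : ¬ ∃ s : N ⟶ M, s ≫ f = 𝟙 N)
    (halmost : ∀ (L : B) (g : L ⟶ N), (¬ ∃ s : N ⟶ L, s ≫ g = 𝟙 N) → ∃ t : L ⟶ M, t ≫ f = g)
    -- `N` has no nonzero direct summand in `C`
    (hN : ∀ (W N'' : B) (_ : N ≅ W ⊞ N''), P W → IsZero W) :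
    (¬ ∃ s : (Quotient.functor (factorRel P)).obj N ⟶ (Quotient.functor (factorRel P)).obj M,
      s ≫ (Quotient.functor (factorRel P)).map f = 𝟙 ((Quotient.functor (factorRel P)).obj N)) ∧
    (∀ (L : B) (g : (Quotient.functor (factorRel P)).obj L ⟶
        (Quotient.functor (factorRel P)).obj N),
      (¬ ∃ s : (Quotient.functor (factorRel P)).obj N ⟶ (Quotient.functor (factorRel P)).obj L,
        s ≫ g = 𝟙 ((Quotient.functor (factorRel P)).obj N)) →
      ∃ t : (Quotient.functor (factorRel P)).obj L ⟶ (Quotient.functor (factorRel P)).obj M,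
        t ≫ (Quotient.functor (factorRel P)).map f = g) :=
  stmt4_general B P hCsum hCadd M N f hnotretr halmost hN
end

section
/- A bounded cochain complex X of modules over a ring A is a projective object in the category of bounded cochain complexes of A-modules if and only if X is contractible (homotopy equivalent to the zero complex, equivalently split exact) and each term X^n is a projective A-module. -/
/-!
If `X` is projective in `C^b(Mod A)`, it splits off every epimorphism onto it. The projection
`cone(𝟙 (X⟦-1⟧)) ⟶ X⟦-1⟧⟦1⟧ ≅ X` is a degreewise split epimorphism from a contractible bounded
complex, so `X` is a retract of a contractible complex, hence contractible. Maps from `X` to the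
disk `double (𝟙 N)` in degrees `n - 1, n` are the same as maps `X^n ⟶ N`, and disks are bounded,
so lifting along disk maps makes `X^n` projective.

Conversely, if `h` is a contraction of `X` (`dh + hd = 𝟙`) and `t` lifts `f` degreewise along `e`,
then `dht + htd` is a chain map whose composite with `e` is `(dh + hd) f = f`. Epimorphisms of
bounded complexes are degreewise epimorphisms because bounded complexes are closed under quotients.
-/

open CategoryTheory Limits

/-- A bounded cochain complex: only finitely many nonzero terms. -/
def IsBoundedComplex {A : Type} [Ring A] (X : CochainComplex (ModuleCat A) ℤ) : Prop :=
  ∃ a b : ℤ, ∀ n : ℤ, (n < a ∨ b < n) → IsZero (X.X n)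

namespace HomologicalComplex

variable {C : Type*} [Category* C] [HasZeroMorphisms C] [HasZeroObject C]
  {X₀ X₁ : C} {f : X₀ ⟶ X₁} {ι : Type*} {c : ComplexShape ι} {i₀ i₁ : ι} (hi₀₁ : c.Rel i₀ i₁)

section

variable (h : i₀ ≠ i₁) {K : HomologicalComplex C c} (φ₀ : K.X i₀ ⟶ X₀) (φ₁ : K.X i₁ ⟶ X₁)
  (comm : K.d i₀ i₁ ≫ φ₁ = φ₀ ≫ f) (hφ : ∀ k, c.Rel k i₀ → K.d k i₀ ≫ φ₀ = 0)

open scoped Classical in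
noncomputable def mkHomToDouble : K ⟶ double f hi₀₁ where
  f k :=
    if hk₀ : k = i₀ then
      eqToHom (by rw [hk₀]) ≫ φ₀ ≫ (doubleXIso₀ f hi₀₁).inv ≫ eqToHom (by rw [hk₀])
    else if hk₁ : k = i₁ then
      eqToHom (by rw [hk₁]) ≫ φ₁ ≫ (doubleXIso₁ f hi₀₁ h).inv ≫ eqToHom (by rw [hk₁])
    else 0
  comm' k₀ k₁ hk := by
    by_cases h₁ : k₁ = i₁
    · subst h₁
      obtain rfl := c.prev_eq hk hi₀₁
      simp [dif_neg h.symm, double_d f hi₀₁ h, reassoc_of% comm]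
    · by_cases h₀ : k₁ = i₀
      · subst h₀
        simp [double_d_eq_zero₁ f hi₀₁ _ _ h, reassoc_of% (hφ k₀ hk)]
      · exact (isZero_double_X f hi₀₁ k₁ h₀ h₁).eq_of_tgt _ _

@[simp]
lemma mkHomToDouble_f₀ :
    (mkHomToDouble hi₀₁ h φ₀ φ₁ comm hφ).f i₀ = φ₀ ≫ (doubleXIso₀ f hi₀₁).inv := by
  simp [mkHomToDouble]

@[simp]
lemma mkHomToDouble_f₁ :
    (mkHomToDouble hi₀₁ h φ₀ φ₁ comm hφ).f i₁ = φ₁ ≫ (doubleXIso₁ f hi₀₁ h).inv := by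
  simp [mkHomToDouble, dif_neg h.symm]

end

lemma epi_to_double_of_epi_f {K : HomologicalComplex C c} (φ : K ⟶ double f hi₀₁)
    (h₀ : Epi (φ.f i₀)) (h₁ : Epi (φ.f i₁)) : Epi φ := by
  refine epi_of_epi_f _ fun k => ?_
  by_cases hk : k = i₀ ∨ k = i₁
  · obtain rfl | rfl := hk <;> assumption
  · rw [not_or] at hk
    exact (isZero_double_X f hi₀₁ k hk.1 hk.2).epi _

end HomologicalComplex

section Contractible

variable {C : Type*} [Category* C] [Preadditive C] {ι : Type*} {c : ComplexShape ι}

noncomputable def CategoryTheory.Retract.homotopyIdZero {K L : HomologicalComplex C c}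
    (h : Retract K L) (hL : Homotopy (𝟙 L) 0) : Homotopy (𝟙 K) 0 :=
  (Homotopy.ofEq (by simp)).trans (((hL.compRight h.r).compLeft h.i).trans (.ofEq (by simp)))

lemma exists_lift_of_homotopy_id_zero {X E Y : HomologicalComplex C c} (hX : Homotopy (𝟙 X) 0)
    [∀ n, Projective (X.X n)] (f : X ⟶ Y) (e : E ⟶ Y) [∀ n, Epi (e.f n)] :
    ∃ l : X ⟶ E, l ≫ e = f := by
  have hid : Homotopy.nullHomotopicMap hX.hom = 𝟙 X := by
    ext n
    simpa [Homotopy.nullHomotopicMap] using (hX.comm n).symm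
  refine ⟨Homotopy.nullHomotopicMap fun i j => hX.hom i j ≫ Projective.factorThru (f.f j) (e.f j),
    ?_⟩
  simp only [Homotopy.nullHomotopicMap_comp, Category.assoc, Projective.factorThru_comp]
  rw [← Homotopy.nullHomotopicMap_comp hX.hom f, hid, Category.id_comp]

end Contractible

lemma CochainComplex.mappingCone.epi_triangle_mor₃ {C : Type*} [Category* C] [Preadditive C]
    [HasBinaryBiproducts C] {K L : CochainComplex C ℤ} (φ : K ⟶ L) : Epi (triangle φ).mor₃ := by
  refine HomologicalComplex.epi_of_epi_f _ fun q => ?_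
  have h : Epi (-(K.shiftFunctorObjXIso 1 q (q + 1) (by omega)).inv) := inferInstance
  rw [← inl_v_triangle_mor₃_f φ (q + 1) q (by omega)] at h
  -- `h` matches the instance argument only after unfolding `triangle`, so it is passed by hand
  exact @epi_of_epi _ _ _ _ _ ((inl φ).v (q + 1) q (by omega)) _ h

namespace IsBoundedComplex

variable {A : Type} [Ring A]

lemma shift {X : CochainComplex (ModuleCat A) ℤ} (hX : IsBoundedComplex X) (k : ℤ) :
    IsBoundedComplex (X⟦k⟧) := by
  obtain ⟨a, b, hab⟩ := hX
  exact ⟨a - k, b - k, fun n hn => (X.shiftFunctorObjXIso k n (n + k) rfl).isZero_iff.2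
    (hab _ (by omega))⟩

lemma mappingCone {K L : CochainComplex (ModuleCat A) ℤ} (φ : K ⟶ L) (hK : IsBoundedComplex K)
    (hL : IsBoundedComplex L) : IsBoundedComplex (CochainComplex.mappingCone φ) := by
  obtain ⟨a, b, hab⟩ := hK
  obtain ⟨a', b', hab'⟩ := hL
  exact ⟨min (a - 1) a', max (b - 1) b', fun n hn =>
    (CochainComplex.mappingCone.isZero_X_iff φ n).2 ⟨hab _ (by omega), hab' _ (by omega)⟩⟩

lemma double {X₀ X₁ : ModuleCat A} (f : X₀ ⟶ X₁) {i₀ i₁ : ℤ}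
    (h : (ComplexShape.up ℤ).Rel i₀ i₁) : IsBoundedComplex (HomologicalComplex.double f h) := by
  have h' : i₀ + 1 = i₁ := h
  exact ⟨i₀, i₁, fun n hn => HomologicalComplex.isZero_double_X f h n (by omega) (by omega)⟩

instance : ObjectProperty.IsClosedUnderQuotients (IsBoundedComplex (A := A)) where
  prop_of_epi {X Y} π _ := by
    rintro ⟨a, b, hab⟩
    exact ⟨a, b, fun n hn => (hab n hn).of_epi (π.f n)⟩

open ZeroObject in
instance : ObjectProperty.ContainsZero (IsBoundedComplex (A := A)) where
  exists_zero := ⟨0, isZero_zero _, 0, 0,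
    fun n _ => (HomologicalComplex.eval _ _ n).map_isZero (isZero_zero _)⟩

instance : (ObjectProperty.ι (IsBoundedComplex (A := A))).PreservesEpimorphisms :=
  -- without this, instance search for finite products gets stuck on a universe constraint
  have := Abelian.has_finite_products (C := CochainComplex (ModuleCat A) ℤ)
  ObjectProperty.preservesEpimorphisms_ι_of_isNormalMonoCategory _

lemma epi_iff_epi_hom {X Y : ObjectProperty.FullSubcategory (IsBoundedComplex (A := A))}
    (φ : X ⟶ Y) : Epi φ ↔ Epi φ.hom :=
  ⟨fun _ => (ObjectProperty.ι _).map_epi φ, fun _ => (ObjectProperty.ι _).epi_of_epi_map ‹_›⟩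

open HomologicalComplex in
lemma projective_X_of_projective
    {X : ObjectProperty.FullSubcategory (IsBoundedComplex (A := A))} [Projective X] (n : ℤ) :
    Projective (X.obj.X n) := by
  have hn : (ComplexShape.up ℤ).Rel (n - 1) n := by simp
  have hne : n - 1 ≠ n := by omega
  let disk (M : ModuleCat A) : ObjectProperty.FullSubcategory (IsBoundedComplex (A := A)) :=
    ⟨HomologicalComplex.double (𝟙 M) hn, IsBoundedComplex.double _ hn⟩
  refine ⟨fun {E N} u e _ => ?_⟩
  let toDisk : X ⟶ disk N := ObjectProperty.homMk
    (mkHomToDouble hn hne (X.obj.d (n - 1) n ≫ u) u (by simp) (by simp))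
  let diskMap : disk E ⟶ disk N := ObjectProperty.homMk
    (mkHomToDouble hn hne ((doubleXIso₀ _ hn).hom ≫ e) ((doubleXIso₁ _ hn hne).hom ≫ e)
      (by simp [disk, double_d _ _ hne])
      (fun k _ => by simp [disk, double_d_eq_zero₁ _ _ _ _ hne]))
  have : Epi diskMap := (epi_iff_epi_hom diskMap).2 (epi_to_double_of_epi_f hn _
    (by simp only [diskMap, ObjectProperty.homMk_hom, mkHomToDouble_f₀]; infer_instance)
    (by simp only [diskMap, ObjectProperty.homMk_hom, mkHomToDouble_f₁]; infer_instance))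
  obtain ⟨L, hL⟩ := Projective.factors toDisk diskMap
  refine ⟨L.hom.f n ≫ (doubleXIso₁ _ hn hne).hom, ?_⟩
  have hLn := congrArg (fun g => g.hom.f n) hL
  exact (cancel_mono (doubleXIso₁ _ hn hne).inv).1 (by simpa [diskMap, toDisk] using hLn)

lemma nonempty_homotopy_id_zero_of_projective
    {X : ObjectProperty.FullSubcategory (IsBoundedComplex (A := A))} [Projective X] :
    Nonempty (Homotopy (𝟙 X.obj) 0) := by
  let K := X.obj⟦(-1 : ℤ)⟧
  let ε : K⟦(1 : ℤ)⟧ ≅ X.obj := (shiftFunctorCompIsoId _ (-1 : ℤ) 1 (by norm_num)).app X.obj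
  let p : CochainComplex.mappingCone (𝟙 K) ⟶ X.obj :=
    (CochainComplex.mappingCone.triangle (𝟙 K)).mor₃ ≫ ε.hom
  have : Epi p := epi_comp' (CochainComplex.mappingCone.epi_triangle_mor₃ (𝟙 K))
    (inferInstance : Epi ε.hom)
  let p' : (⟨_, (X.property.shift _).mappingCone _ (X.property.shift _)⟩ :
      ObjectProperty.FullSubcategory (IsBoundedComplex (A := A))) ⟶ X := ObjectProperty.homMk p
  have : Epi p' := (epi_iff_epi_hom p').2 this
  obtain ⟨s, hs⟩ := Projective.factors (𝟙 X) p'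
  exact ⟨Retract.homotopyIdZero ⟨s.hom, p, congrArg InducedCategory.Hom.hom hs⟩
    (CochainComplex.mappingCone.homotopyToZeroOfId K)⟩

end IsBoundedComplex

open IsBoundedComplex in
/-- A bounded cochain complex `X` of `A`-modules is a projective object in the category
`C^b(Mod A)` of bounded cochain complexes iff `X` is contractible and each term is projective. -/
theorem stmt5 (A : Type) [Ring A]
    (X : ObjectProperty.FullSubcategory (IsBoundedComplex (A := A))) :
    Projective X ↔
      (Nonempty (Homotopy (𝟙 X.obj) 0) ∧ ∀ n : ℤ, Projective (X.obj.X n)) := by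
  constructor
  · intro _
    exact ⟨nonempty_homotopy_id_zero_of_projective, projective_X_of_projective⟩
  · rintro ⟨⟨hX⟩, _⟩
    refine ⟨fun {E Y} f e he => ?_⟩
    have : Epi e.hom := (epi_iff_epi_hom e).1 he
    obtain ⟨l, hl⟩ := exists_lift_of_homotopy_id_zero hX f.hom e.hom
    exact ⟨ObjectProperty.homMk l, InducedCategory.hom_ext hl⟩
end

section
/- A bounded cochain complex X of modules over a ring A is an injective object in the category of bounded cochain complexes of A-modules if and only if X is contractible and each term X^n is an injective A-module. -/
open CategoryTheory Limits

/-!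
The disk `M ⟶ M` (the identity, in degrees `n` and `n + 1`) corepresents `K ↦ (M ⟶ K.X n)`.
Hence monomorphisms of bounded complexes are degreewise monomorphisms, and injectivity of `X`
passes to each `X.X n` by extending maps along the disk map `disk M n ⟶ disk N n` of a mono
`M ⟶ N`. Conversely, if `s` is a contracting homotopy of `X` and all `X.X n` are injective,
a map `g : Y ⟶ X` extends along a degreewise mono `f : Y ⟶ Z` to the null-homotopic map
`d k + k d`, where `k` extends `g ∘ s` termwise. Finally, `X` embeds into the contractible
bounded complex `cone (𝟙 X)`; if `X` is injective this embedding has a retraction, and a retract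
of a contractible complex is contractible.
-/

open Opposite HomologicalComplex

theorem HomologicalComplex.exists_comp_eq_of_homotopy_id_zero {C : Type*} [Category C]
    [Preadditive C] {ι : Type*} {c : ComplexShape ι} {K Y Z : HomologicalComplex C c}
    (h : Homotopy (𝟙 K) 0) [∀ i, Injective (K.X i)] (f : Y ⟶ Z) [∀ i, Mono (f.f i)]
    (g : Y ⟶ K) : ∃ φ : Z ⟶ K, f ≫ φ = g := by
  have h_eq : Homotopy.nullHomotopicMap h.hom = 𝟙 K := by
    ext i
    have := h.comm i
    rw [zero_f, add_zero] at this
    exact this.symm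
  refine ⟨Homotopy.nullHomotopicMap fun i j ↦
    Injective.factorThru (g.f i ≫ h.hom i j) (f.f i), ?_⟩
  rw [Homotopy.comp_nullHomotopicMap]
  simp only [Injective.comp_factorThru]
  rw [← Homotopy.comp_nullHomotopicMap, h_eq, Category.comp_id]

noncomputable def Homotopy.idZeroOfRetract {C : Type*} [Category C] [Preadditive C]
    {ι : Type*} {c : ComplexShape ι} {K L : HomologicalComplex C c} (i : K ⟶ L) (r : L ⟶ K)
    (hir : i ≫ r = 𝟙 K) (h : Homotopy (𝟙 L) 0) : Homotopy (𝟙 K) 0 :=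
  (Homotopy.ofEq (by simp [hir] : 𝟙 K = i ≫ 𝟙 L ≫ r)).trans
    (((h.compRight r).compLeft i).trans (Homotopy.ofEq (by simp)))

namespace CochainComplex

variable {C : Type*} [Category C]

section HasZeroMorphisms

variable [HasZeroMorphisms C] [HasZeroObject C]

noncomputable abbrev disk (M : C) (n : ℤ) : CochainComplex C ℤ :=
  double (𝟙 M) (show (ComplexShape.up ℤ).Rel n (n + 1) from rfl)

noncomputable abbrev diskXIso (M : C) (n : ℤ) : (disk M n).X n ≅ M :=
  doubleXIso₀ _ _

noncomputable def diskCorepresentableBy (M : C) (n : ℤ) :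
    (eval C (.up ℤ) n ⋙ coyoneda.obj (op M)).CorepresentableBy (disk M n) :=
  evalCompCoyonedaCorepresentableByDoubleId _ (by omega) M

noncomputable def diskMap {M N : C} (u : M ⟶ N) (n : ℤ) : disk M n ⟶ disk N n :=
  mkHomFromDouble _ (by omega) (u ≫ (diskXIso N n).inv)
    (u ≫ (doubleXIso₁ _ _ (by omega)).inv) (by simp [double_d])
    (fun k _ ↦ by rw [double_d_eq_zero₀ _ _ _ _ (by omega), comp_zero])

instance {M N : C} (u : M ⟶ N) [Mono u] (n : ℤ) : Mono (diskMap u n) := by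
  refine mono_of_mono_f _ fun k ↦ ?_
  by_cases h₀ : k = n
  · subst h₀
    simp only [diskMap, mkHomFromDouble_f₀]
    infer_instance
  by_cases h₁ : k = n + 1
  · subst h₁
    simp only [diskMap, mkHomFromDouble_f₁]
    infer_instance
  exact (isZero_double_X _ _ k h₀ h₁).mono _

variable (P : ObjectProperty (CochainComplex C ℤ))

lemma mono_hom_f_of_mono (hP : ∀ M n, P (disk M n)) {Y Z : P.FullSubcategory} (f : Y ⟶ Z)
    [Mono f] (n : ℤ) : Mono (f.hom.f n) := by
  refine ⟨fun {M} a b hab ↦ ?_⟩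
  let e := diskCorepresentableBy M n
  obtain ⟨α, rfl⟩ := e.homEquiv.surjective a
  obtain ⟨β, rfl⟩ := e.homEquiv.surjective b
  let D : P.FullSubcategory := ⟨disk M n, hP M n⟩
  have key : (ObjectProperty.homMk α : D ⟶ Y) ≫ f = ObjectProperty.homMk β ≫ f := by
    ext : 1
    apply e.homEquiv.injective
    rw [ObjectProperty.FullSubcategory.comp_hom, ObjectProperty.FullSubcategory.comp_hom,
      e.homEquiv_comp, e.homEquiv_comp]
    exact hab
  exact congrArg (fun g ↦ e.homEquiv g.hom) (cancel_mono f |>.mp key)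

lemma injective_X_of_injective (hP : ∀ M n, P (disk M n)) (X : P.FullSubcategory)
    [Injective X] (n : ℤ) : Injective (X.obj.X n) := by
  refine ⟨fun {M N} φ u _ ↦ ?_⟩
  let v : (⟨disk M n, hP M n⟩ : P.FullSubcategory) ⟶ ⟨disk N n, hP N n⟩ :=
    ObjectProperty.homMk (diskMap u n)
  have : Mono v := P.ι.mono_of_mono_map (inferInstanceAs (Mono (diskMap u n)))
  let φ' : disk M n ⟶ X.obj :=
    mkHomFromDouble _ (by omega) φ (φ ≫ X.obj.d n (n + 1)) (by simp) (by simp)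
  obtain ⟨ψ, hψ⟩ := Injective.factors (ObjectProperty.homMk φ' : _ ⟶ X) v
  refine ⟨(diskXIso N n).inv ≫ ψ.hom.f n, ?_⟩
  simpa [v, φ', diskMap] using congr_hom (congrArg InducedCategory.Hom.hom hψ) n

end HasZeroMorphisms

variable [Preadditive C] (P : ObjectProperty (CochainComplex C ℤ))

lemma injective_of_homotopy_id_zero [HasZeroObject C] (hP : ∀ M n, P (disk M n))
    {X : P.FullSubcategory} (h : Homotopy (𝟙 X.obj) 0) [∀ n, Injective (X.obj.X n)] :
    Injective X := by
  refine ⟨fun {Y Z} g f _ ↦ ?_⟩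
  have := mono_hom_f_of_mono P hP f
  obtain ⟨φ, hφ⟩ := exists_comp_eq_of_homotopy_id_zero h f.hom g.hom
  exact ⟨ObjectProperty.homMk φ, by ext : 1; exact hφ⟩

noncomputable def homotopyIdZeroOfInjective [HasBinaryBiproducts C]
    (hP : ∀ K, P K → P (mappingCone (𝟙 K))) (X : P.FullSubcategory) [Injective X] :
    Homotopy (𝟙 X.obj) 0 :=
  let i : X ⟶ ⟨_, hP _ X.property⟩ := ObjectProperty.homMk (mappingCone.inr (𝟙 X.obj))
  have : Mono i := P.ι.mono_of_mono_map
    (mono_of_mono_f _ fun n ↦ mono_of_mono_fac (mappingCone.inr_f_snd_v _ n))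
  Homotopy.idZeroOfRetract i.hom (Injective.factorThru (𝟙 X) i).hom
    (congrArg InducedCategory.Hom.hom (Injective.comp_factorThru (𝟙 X) i))
    (mappingCone.homotopyToZeroOfId X.obj)

end CochainComplex

lemma isBoundedComplex_disk {A : Type} [Ring A] (M : ModuleCat A) (n : ℤ) :
    IsBoundedComplex (CochainComplex.disk M n) :=
  ⟨n, n + 1, fun k hk ↦ isZero_double_X _ _ k (by omega) (by omega)⟩

lemma IsBoundedComplex.mappingCone_id {A : Type} [Ring A] {K : CochainComplex (ModuleCat A) ℤ}
    (hK : IsBoundedComplex K) : IsBoundedComplex (CochainComplex.mappingCone (𝟙 K)) := by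
  obtain ⟨a, b, hab⟩ := hK
  exact ⟨a - 1, b, fun n hn ↦
    (CochainComplex.mappingCone.isZero_X_iff _ n).2 ⟨hab _ (by omega), hab _ (by omega)⟩⟩

/-- A bounded cochain complex `X` of `A`-modules is an injective object in the category
`C^b(Mod A)` of bounded cochain complexes iff `X` is contractible and each term is injective. -/
theorem stmt6 (A : Type) [Ring A]
    (X : ObjectProperty.FullSubcategory (IsBoundedComplex (A := A))) :
    Injective X ↔
      (Nonempty (Homotopy (𝟙 X.obj) 0) ∧ ∀ n : ℤ, Injective (X.obj.X n)) := by
  constructor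
  · intro hX
    exact ⟨⟨CochainComplex.homotopyIdZeroOfInjective _
        (fun _ ↦ IsBoundedComplex.mappingCone_id) X⟩,
      CochainComplex.injective_X_of_injective _ isBoundedComplex_disk X⟩
  · rintro ⟨⟨h⟩, hX⟩
    exact CochainComplex.injective_of_homotopy_id_zero _ isBoundedComplex_disk h
end
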